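/- Correspondence between projective families and exchangeable distributions on ℕ: for a finite relational vocabulary L, the map sending a probability measure P on the local σ-algebra of L-structures on ℕ to the family (P_D) defined by P_D(X) := P(ℕ_X) (for finite D ⊆ ℕ and L-structure X on D, where ℕ_X is the set of L-structures on ℕ extending X) is a bijection between exchangeable L-distributions on ℕ and projective L families of distributions. Exchangeability of P (invariance of P(ℕ_X) under all permutations of ℕ applied to X) corresponds exactly to projectivity plus well-definedness of the family. -/

import Mathlib

open MeasureTheory

/-- An `L`-structure on domain `D`: an interpretation of each relation symbol `R`
(of arity `ar R`) as a set of `ar R`-tuples from `D`. -/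
def Struc (L : Type) (ar : L → ℕ) (D : Type) : Type :=
  ∀ R : L, (Fin (ar R) → D) → Prop

/-- `ω` (a structure on `D`) extends the image of `X` (a structure on `D'`) along the
injection `ι`; equivalently, `ι` is an embedding of structures from `X` to `ω`. -/
def ExtendsAlong {L : Type} {ar : L → ℕ} {D' D : Type} (ι : D' ↪ D)
    (X : Struc L ar D') (ω : Struc L ar D) : Prop :=
  ∀ (R : L) (s : Fin (ar R) → D'), ω R (fun i => ι (s i)) ↔ X R s

/-- Transport of a structure along a bijection. -/
def Struc.map {L : Type} {ar : L → ℕ} {D D' : Type} (e : D ≃ D')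
    (X : Struc L ar D) : Struc L ar D' :=
  fun R t => X R (fun i => e.symm (t i))

/-- The reduct of a structure to a subvocabulary `E`. -/
def reduct {L : Type} {ar : L → ℕ} (E : Set L) {D : Type} (X : Struc L ar D) :
    Struc ↥E (fun R => ar ↑R) D :=
  fun R t => X ↑R t

/-- A family of distributions indexed by all finite sets is projective if marginals
are invariant under injections. -/
def Projective {L : Type} {ar : L → ℕ}
    (P : ∀ (D : Type) [Fintype D], PMF (Struc L ar D)) : Prop :=
  ∀ (D' D : Type) [Fintype D'] [Fintype D] (ι : D' ↪ D) (X : Struc L ar D'),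
    P D' X = (P D).toOuterMeasure {ω | ExtendsAlong ι X ω}

/-- A structured (`S`-input, `T`-output) family of distributions is projective if
marginals are invariant under embeddings of input structures. -/
def ProjFam {S T : Type} {arS : S → ℕ} {arT : T → ℕ}
    (P : ∀ (D : Type) [Fintype D], Struc S arS D → PMF (Struc T arT D)) : Prop :=
  ∀ (D' D : Type) [Fintype D'] [Fintype D] (ι : D' ↪ D)
    (A' : Struc S arS D') (A : Struc S arS D), ExtendsAlong ι A' A →
    ∀ X : Struc T arT D',
      P D' A' X = (P D A).toOuterMeasure {ω | ExtendsAlong ι X ω}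

/-- The cylinder set of structures on `ℕ` extending `X` along `ι`. -/
def CylN {L : Type} (ar : L → ℕ) {D : Type} (ι : D ↪ ℕ) (X : Struc L ar D) :
    Set (Struc L ar ℕ) :=
  {ω | ExtendsAlong ι X ω}

/-- The local σ-algebra on the set of `L`-structures on `ℕ`, generated by the
cylinder sets. -/
instance localMS (L : Type) (ar : L → ℕ) : MeasurableSpace (Struc L ar ℕ) :=
  MeasurableSpace.generateFrom
    {S | ∃ (n : ℕ) (ι : Fin n ↪ ℕ) (X : Struc L ar (Fin n)), S = CylN ar ι X}

/-- Exchangeability of a distribution on the local σ-algebra: invariance of cylinder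
probabilities under all permutations of `ℕ`. -/
def Exch {L : Type} (ar : L → ℕ) (P : Measure (Struc L ar ℕ)) : Prop :=
  ∀ (e : ℕ ≃ ℕ) (n : ℕ) (ι : Fin n ↪ ℕ) (X : Struc L ar (Fin n)),
    P (CylN ar ι X) = P (CylN ar (ι.trans e.toEmbedding) X)

/-! The marginal of `P` on a finite `D` is read off any copy of `D` inside `ℕ`; exchangeability
makes it independent of the copy, which gives projectivity, and two exchangeable measures with the
same marginals agree on the π-system of cylinder sets, hence everywhere.

Conversely, by projectivity a family `Q` defines a consistent additive content on cylinder sets.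
Coding structures as points of the compact space of Boolean assignments to atomic facts makes
cylinder sets clopen, so a countable cover of a cylinder set by cylinder sets has a finite
subcover; the content is therefore σ-subadditive and Carathéodory's theorem extends it to a
measure. Its cylinder probabilities are the `Q D X`, whatever the copy, so it is exchangeable. -/

open scoped ENNReal

namespace Struc

variable {L : Type} {ar : L → ℕ}

def comap {D' D : Type} (f : D' → D) (ω : Struc L ar D) : Struc L ar D' :=
  fun R t => ω R (fun i => f (t i))

abbrev restrict (n : ℕ) : Struc L ar ℕ → Struc L ar (Fin n) :=
  comap Fin.val

lemma comap_surjective {D' D : Type} {f : D' → D} (hf : Function.Injective f) :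
    Function.Surjective (comap f : Struc L ar D → Struc L ar D') := by
  intro X
  refine ⟨fun R t => ∃ s, (fun i => f (s i)) = t ∧ X R s, ?_⟩
  funext R s
  refine propext ⟨?_, fun h => ⟨s, rfl, h⟩⟩
  rintro ⟨s', hs', hX⟩
  rwa [← funext fun i => hf (congrFun hs' i)]

lemma comap_injective {D' D : Type} {f : D' → D} (hf : Function.Surjective f) :
    Function.Injective (comap f : Struc L ar D → Struc L ar D') := by
  intro Y Y' h
  funext R t
  simpa [comap, Function.surjInv_eq hf] using congrFun (congrFun h R) (Function.surjInv hf ∘ t)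

instance [Finite L] {D : Type} [Finite D] : Finite (Struc L ar D) := by
  unfold Struc; infer_instance

end Struc

open Struc

section Cylinders

variable {L : Type} {ar : L → ℕ}

lemma extendsAlong_iff_comap_eq {D' D : Type} (ι : D' ↪ D) (X : Struc L ar D')
    (ω : Struc L ar D) : ExtendsAlong ι X ω ↔ comap ι ω = X := by
  refine ⟨fun h => funext fun R => funext fun s => propext (h R s), ?_⟩
  rintro rfl R s
  rfl

lemma cylN_eq_preimage {D : Type} (ι : D ↪ ℕ) (X : Struc L ar D) :
    CylN ar ι X = comap ι ⁻¹' {X} :=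
  Set.ext fun ω => extendsAlong_iff_comap_eq ι X ω

lemma cylN_eq_cylN_map {D D₂ : Type} (e : D ≃ D₂) (ι : D ↪ ℕ) (X : Struc L ar D) :
    CylN ar ι X = CylN ar (e.symm.toEmbedding.trans ι) (Struc.map e X) := by
  simp only [cylN_eq_preimage]
  ext ω
  exact (comap_injective (f := e.symm) e.symm.surjective).eq_iff.symm

lemma exists_comap_eq_comap_restrict {D : Type} [Finite D] (κ : D ↪ ℕ) :
    ∃ (m : ℕ) (κ' : D ↪ Fin m), ∀ ω : Struc L ar ℕ, comap κ ω = comap κ' (restrict m ω) := by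
  obtain ⟨B, hB⟩ := (Set.finite_range κ).bddAbove
  refine ⟨B + 1, ⟨fun d => ⟨κ d, Nat.lt_succ_of_le (hB ⟨d, rfl⟩)⟩, ?_⟩, fun ω => rfl⟩
  exact fun d d' h => κ.injective (congrArg Fin.val h)

variable (L ar) in
def cylinderSets : Set (Set (Struc L ar ℕ)) :=
  {A | ∃ (n : ℕ) (S : Set (Struc L ar (Fin n))), A = restrict n ⁻¹' S}

lemma restrict_preimage_mem_cylinderSets (n : ℕ) (S : Set (Struc L ar (Fin n))) :
    restrict n ⁻¹' S ∈ cylinderSets L ar :=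
  ⟨n, S, rfl⟩

lemma comap_preimage_mem_cylinderSets {D : Type} [Finite D] (κ : D ↪ ℕ)
    (S : Set (Struc L ar D)) : comap κ ⁻¹' S ∈ cylinderSets L ar := by
  obtain ⟨m, κ', hκ⟩ := exists_comap_eq_comap_restrict (L := L) (ar := ar) κ
  refine ⟨m, comap κ' ⁻¹' S, ?_⟩
  ext ω
  simp only [Set.mem_preimage, hκ]

lemma exists_common_restrict {A B : Set (Struc L ar ℕ)} (hA : A ∈ cylinderSets L ar)
    (hB : B ∈ cylinderSets L ar) :
    ∃ (n : ℕ) (S T : Set (Struc L ar (Fin n))), A = restrict n ⁻¹' S ∧ B = restrict n ⁻¹' T := by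
  obtain ⟨n₁, S₁, rfl⟩ := hA
  obtain ⟨n₂, S₂, rfl⟩ := hB
  exact ⟨max n₁ n₂, comap (Fin.castLE (le_max_left _ _)) ⁻¹' S₁,
    comap (Fin.castLE (le_max_right _ _)) ⁻¹' S₂, rfl, rfl⟩

lemma isSetRing_cylinderSets : IsSetRing (cylinderSets L ar) where
  empty_mem := restrict_preimage_mem_cylinderSets 0 ∅
  union_mem _ _ hA hB := by
    obtain ⟨n, S, T, rfl, rfl⟩ := exists_common_restrict hA hB
    exact restrict_preimage_mem_cylinderSets n (S ∪ T)
  sdiff_mem _ _ hA hB := by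
    obtain ⟨n, S, T, rfl, rfl⟩ := exists_common_restrict hA hB
    exact restrict_preimage_mem_cylinderSets n (S \ T)

lemma measurableSet_of_mem_cylinderSets [Finite L] {A : Set (Struc L ar ℕ)}
    (hA : A ∈ cylinderSets L ar) : MeasurableSet A := by
  obtain ⟨n, S, rfl⟩ := hA
  rw [← Set.biUnion_preimage_singleton]
  refine MeasurableSet.biUnion S.to_countable fun X _ => ?_
  exact MeasurableSpace.measurableSet_generateFrom
    ⟨n, Fin.valEmbedding, X, (cylN_eq_preimage Fin.valEmbedding X).symm⟩

lemma measurableSet_comap_preimage [Finite L] {D : Type} [Finite D] (κ : D ↪ ℕ)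
    (S : Set (Struc L ar D)) : MeasurableSet (comap κ ⁻¹' S) :=
  measurableSet_of_mem_cylinderSets (comap_preimage_mem_cylinderSets κ S)

lemma localMS_eq_generateFrom_cylinderSets [Finite L] :
    localMS L ar = MeasurableSpace.generateFrom (cylinderSets L ar) := by
  refine le_antisymm (MeasurableSpace.generateFrom_le ?_)
    (MeasurableSpace.generateFrom_le fun _ => measurableSet_of_mem_cylinderSets)
  rintro _ ⟨n, ι, X, rfl⟩
  rw [cylN_eq_preimage]
  exact MeasurableSpace.measurableSet_generateFrom (comap_preimage_mem_cylinderSets ι _)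

end Cylinders

section Compactness

variable {L : Type} {ar : L → ℕ}

/-- Coding a structure by the truth values of its atomic facts `R t`: the code space is compact,
and cylinder sets pull back to clopen sets. -/
def Struc.ofBool {D : Type} (x : (Σ R : L, Fin (ar R) → D) → Bool) : Struc L ar D :=
  fun R t => x ⟨R, t⟩ = true

lemma Struc.ofBool_surjective {D : Type} :
    Function.Surjective (Struc.ofBool : _ → Struc L ar D) := by
  classical
  exact fun ω =>
    ⟨fun a => decide (ω a.1 a.2), funext fun R => funext fun t => by simp [Struc.ofBool]⟩

lemma isClopen_preimage_ofBool [Finite L] {A : Set (Struc L ar ℕ)}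
    (hA : A ∈ cylinderSets L ar) : IsClopen (Struc.ofBool ⁻¹' A) := by
  obtain ⟨n, S, rfl⟩ := hA
  have hcont : Continuous fun (x : (Σ R : L, Fin (ar R) → ℕ) → Bool)
      (a : Σ R : L, Fin (ar R) → Fin n) => x ⟨a.1, fun i => a.2 i⟩ :=
    continuous_pi fun a => continuous_apply _
  exact (isClopen_discrete (Struc.ofBool ⁻¹' S)).preimage hcont

lemma exists_finset_subset_iUnion_of_mem_cylinderSets [Finite L] {A : Set (Struc L ar ℕ)}
    {t : ℕ → Set (Struc L ar ℕ)} (hA : A ∈ cylinderSets L ar)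
    (ht : ∀ i, t i ∈ cylinderSets L ar) (hsub : A ⊆ ⋃ i, t i) :
    ∃ s : Finset ℕ, A ⊆ ⋃ i ∈ s, t i := by
  obtain ⟨s, hs⟩ := (isClopen_preimage_ofBool hA).isClosed.isCompact.elim_finite_subcover
    (fun i => Struc.ofBool ⁻¹' t i) (fun i => (isClopen_preimage_ofBool (ht i)).isOpen)
    (by simpa only [Set.preimage_iUnion] using Set.preimage_mono hsub)
  refine ⟨s, fun ω hω => ?_⟩
  obtain ⟨x, rfl⟩ := Struc.ofBool_surjective ω
  simpa only [Set.mem_preimage, Set.preimage_iUnion, Set.mem_iUnion] using hs hω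

end Compactness

lemma PMF.toOuterMeasure_union {α : Type*} (p : PMF α) {s t : Set α} (h : Disjoint s t) :
    p.toOuterMeasure (s ∪ t) = p.toOuterMeasure s + p.toOuterMeasure t := by
  simp only [PMF.toOuterMeasure_apply, Set.indicator_union_of_disjoint h,
    ENNReal.tsum_add]

namespace Projective

variable {L : Type} {ar : L → ℕ} {Q : ∀ (D : Type) [Fintype D], PMF (Struc L ar D)}

lemma map_comap (hQ : Projective Q) {D' D : Type} [Fintype D'] [Fintype D] (ι : D' ↪ D) :
    (Q D).map (comap ι) = Q D' := by
  ext X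
  rw [← PMF.toOuterMeasure_apply_singleton, PMF.toOuterMeasure_map_apply, hQ D' D ι X]
  congr 1
  exact (Set.ext fun ω => extendsAlong_iff_comap_eq ι X ω).symm

lemma toOuterMeasure_comap_preimage (hQ : Projective Q) {D' D : Type} [Fintype D'] [Fintype D]
    (ι : D' ↪ D) (S : Set (Struc L ar D')) :
    (Q D).toOuterMeasure (comap ι ⁻¹' S) = (Q D').toOuterMeasure S := by
  rw [← PMF.toOuterMeasure_map_apply, hQ.map_comap]

lemma toOuterMeasure_eq_of_restrict_preimage_eq (hQ : Projective Q) {n m : ℕ}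
    {S : Set (Struc L ar (Fin n))} {T : Set (Struc L ar (Fin m))}
    (h : restrict n ⁻¹' S = restrict m ⁻¹' T) :
    (Q (Fin n)).toOuterMeasure S = (Q (Fin m)).toOuterMeasure T := by
  have hn := le_max_left n m
  have hm := le_max_right n m
  have hST : comap (Fin.castLEEmb hn) ⁻¹' S = comap (Fin.castLEEmb hm) ⁻¹' T :=
    (comap_surjective (L := L) (ar := ar) Fin.val_injective).preimage_injective h
  rw [← hQ.toOuterMeasure_comap_preimage (Fin.castLEEmb hn), hST,
    hQ.toOuterMeasure_comap_preimage]

end Projective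

section Extension

variable {L : Type} {ar : L → ℕ} {Q : ∀ (D : Type) [Fintype D], PMF (Struc L ar D)}

variable (Q) in
open Classical in
/-- `restrict n ⁻¹' S ↦ Q_{Fin n}(S)`, independent of the chosen representation by
`Projective.toOuterMeasure_eq_of_restrict_preimage_eq`. -/
noncomputable def cylinderContentFun (A : Set (Struc L ar ℕ)) : ℝ≥0∞ :=
  if h : A ∈ cylinderSets L ar then (Q (Fin h.choose)).toOuterMeasure h.choose_spec.choose else 0

lemma cylinderContentFun_restrict_preimage (hQ : Projective Q) (n : ℕ)
    (S : Set (Struc L ar (Fin n))) :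
    cylinderContentFun Q (restrict n ⁻¹' S) = (Q (Fin n)).toOuterMeasure S := by
  have h := restrict_preimage_mem_cylinderSets n S
  rw [cylinderContentFun, dif_pos h]
  exact hQ.toOuterMeasure_eq_of_restrict_preimage_eq h.choose_spec.choose_spec.symm

noncomputable def Projective.cylinderContent (hQ : Projective Q) :
    AddContent ℝ≥0∞ (cylinderSets L ar) :=
  isSetRing_cylinderSets.addContent_of_union (cylinderContentFun Q)
    (by simpa using cylinderContentFun_restrict_preimage hQ 0 ∅)
    (fun hA hB hAB => by
      obtain ⟨n, S, T, rfl, rfl⟩ := exists_common_restrict hA hB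
      rw [← Set.preimage_union]
      simp only [cylinderContentFun_restrict_preimage hQ]
      exact PMF.toOuterMeasure_union _
        (hAB.of_preimage (comap_surjective (L := L) (ar := ar) Fin.val_injective)))

lemma Projective.cylinderContent_restrict_preimage (hQ : Projective Q) (n : ℕ)
    (S : Set (Struc L ar (Fin n))) :
    hQ.cylinderContent (restrict n ⁻¹' S) = (Q (Fin n)).toOuterMeasure S :=
  cylinderContentFun_restrict_preimage hQ n S

lemma Projective.isSigmaSubadditive_cylinderContent [Finite L] (hQ : Projective Q) :
    hQ.cylinderContent.IsSigmaSubadditive := by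
  intro t ht hU
  obtain ⟨s, hs⟩ := exists_finset_subset_iUnion_of_mem_cylinderSets hU ht subset_rfl
  have hsC := isSetRing_cylinderSets.biUnion_mem s fun i _ => ht i
  calc hQ.cylinderContent (⋃ i, t i)
      ≤ hQ.cylinderContent (⋃ i ∈ s, t i) :=
        addContent_mono isSetRing_cylinderSets.isSetSemiring hU hsC hs
    _ ≤ ∑ i ∈ s, hQ.cylinderContent (t i) :=
        addContent_biUnion_le isSetRing_cylinderSets fun i _ => ht i
    _ ≤ ∑' i, hQ.cylinderContent (t i) := ENNReal.sum_le_tsum s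

noncomputable def Projective.measure [Finite L] (hQ : Projective Q) : Measure (Struc L ar ℕ) :=
  hQ.cylinderContent.measure isSetRing_cylinderSets.isSetSemiring
    localMS_eq_generateFrom_cylinderSets.le hQ.isSigmaSubadditive_cylinderContent

lemma Projective.measure_restrict_preimage [Finite L] (hQ : Projective Q) (n : ℕ)
    (S : Set (Struc L ar (Fin n))) :
    hQ.measure (restrict n ⁻¹' S) = (Q (Fin n)).toOuterMeasure S := by
  rw [Projective.measure, AddContent.measure_eq _ _ localMS_eq_generateFrom_cylinderSets _
    (restrict_preimage_mem_cylinderSets n S), hQ.cylinderContent_restrict_preimage]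

lemma Projective.measure_comap_preimage [Finite L] (hQ : Projective Q) {D : Type} [Fintype D]
    (κ : D ↪ ℕ) (S : Set (Struc L ar D)) :
    hQ.measure (comap κ ⁻¹' S) = (Q D).toOuterMeasure S := by
  obtain ⟨m, κ', hκ⟩ := exists_comap_eq_comap_restrict (L := L) (ar := ar) κ
  have hpre : comap κ ⁻¹' S = restrict m ⁻¹' (comap κ' ⁻¹' S) := by
    ext ω
    simp only [Set.mem_preimage, hκ]
  rw [hpre, hQ.measure_restrict_preimage, hQ.toOuterMeasure_comap_preimage]

lemma Projective.measure_cylN [Finite L] (hQ : Projective Q) {D : Type} [Fintype D]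
    (κ : D ↪ ℕ) (X : Struc L ar D) : hQ.measure (CylN ar κ X) = Q D X := by
  rw [cylN_eq_preimage, hQ.measure_comap_preimage, PMF.toOuterMeasure_apply_singleton]

lemma Projective.isProbabilityMeasure_measure [Finite L] (hQ : Projective Q) :
    IsProbabilityMeasure hQ.measure :=
  ⟨by rw [← Set.preimage_univ, hQ.measure_restrict_preimage 0, PMF.toOuterMeasure_apply,
    Set.indicator_univ, PMF.tsum_coe]⟩

lemma Projective.exch_measure [Finite L] (hQ : Projective Q) : Exch ar hQ.measure := by
  intro e n ι X
  rw [hQ.measure_cylN, hQ.measure_cylN]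

end Extension

section Marginals

variable {L : Type} {ar : L → ℕ} {P : Measure (Struc L ar ℕ)}

lemma Exch.measure_cylN_eq (hE : Exch ar P) {D : Type} [Finite D] (ι₁ ι₂ : D ↪ ℕ)
    (X : Struc L ar D) : P (CylN ar ι₁ X) = P (CylN ar ι₂ X) := by
  let e := (Finite.equivFin D).symm
  obtain ⟨σ, hσ⟩ := Equiv.Perm.exists_extending_pair _ _
    (e.toEmbedding.trans ι₁).injective (e.toEmbedding.trans ι₂).injective
  have hσ' : (e.toEmbedding.trans ι₁).trans σ.toEmbedding = e.toEmbedding.trans ι₂ :=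
    DFunLike.ext _ _ hσ
  rw [cylN_eq_cylN_map e.symm ι₁, cylN_eq_cylN_map e.symm ι₂, hE σ, e.symm_symm, hσ']

lemma measure_comap_preimage_eq_tsum [Finite L] (P : Measure (Struc L ar ℕ)) {D : Type}
    [Finite D] (κ : D ↪ ℕ) (S : Set (Struc L ar D)) :
    P (comap κ ⁻¹' S) = ∑' X : S, P (CylN ar κ X) := by
  simp only [cylN_eq_preimage]
  exact (tsum_measure_preimage_singleton S.to_countable fun X _ =>
    measurableSet_comap_preimage κ {X}).symm

noncomputable def natEmbedding (D : Type) [Fintype D] : D ↪ ℕ :=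
  (Fintype.equivFin D).toEmbedding.trans Fin.valEmbedding

variable (P) in
noncomputable def marginal [Finite L] [IsProbabilityMeasure P] (D : Type) [Fintype D] :
    PMF (Struc L ar D) :=
  ⟨fun X => P (CylN ar (natEmbedding D) X), by
    have h : ∑' X, P (CylN ar (natEmbedding D) X) = 1 := by
      rw [← tsum_univ, ← measure_comap_preimage_eq_tsum, Set.preimage_univ, measure_univ]
    exact h ▸ ENNReal.summable.hasSum⟩

lemma Exch.toOuterMeasure_marginal [Finite L] [IsProbabilityMeasure P] (hE : Exch ar P)
    {D : Type} [Fintype D] (κ : D ↪ ℕ) (S : Set (Struc L ar D)) :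
    (marginal P D).toOuterMeasure S = P (comap κ ⁻¹' S) := by
  rw [PMF.toOuterMeasure_apply, ← tsum_subtype, measure_comap_preimage_eq_tsum]
  exact tsum_congr fun X => hE.measure_cylN_eq (natEmbedding D) κ X.1

lemma Exch.projective_marginal [Finite L] [IsProbabilityMeasure P] (hE : Exch ar P) :
    Projective fun D _ => marginal P D := by
  intro D' D _ _ ι X
  rw [← PMF.toOuterMeasure_apply_singleton,
    hE.toOuterMeasure_marginal (ι.trans (natEmbedding D)),
    hE.toOuterMeasure_marginal (natEmbedding D)]
  exact congrArg P
    (Set.ext fun ω => (extendsAlong_iff_comap_eq ι X (comap (natEmbedding D) ω)).symm)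

lemma Exch.ext_of_marginal_eq [Finite L] {P₁ P₂ : Measure (Struc L ar ℕ)}
    [IsProbabilityMeasure P₁] [IsProbabilityMeasure P₂] (hE₁ : Exch ar P₁) (hE₂ : Exch ar P₂)
    (h : ∀ n, marginal P₁ (Fin n) = marginal P₂ (Fin n)) : P₁ = P₂ := by
  refine ext_of_generate_finite _ localMS_eq_generateFrom_cylinderSets
    isSetRing_cylinderSets.isSetSemiring.isPiSystem ?_ (by simp only [measure_univ])
  rintro _ ⟨n, S, rfl⟩
  have h₁ := hE₁.toOuterMeasure_marginal Fin.valEmbedding S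
  have h₂ := hE₂.toOuterMeasure_marginal Fin.valEmbedding S
  rw [h n] at h₁
  exact h₁.symm.trans h₂

end Marginals

section Correspondence

variable {L : Type} [Finite L] {ar : L → ℕ}

noncomputable def toProjectiveFamily
    (P : {P : Measure (Struc L ar ℕ) // IsProbabilityMeasure P ∧ Exch ar P}) :
    {Q : ∀ (D : Type) [Fintype D], PMF (Struc L ar D) // Projective Q} :=
  haveI := P.2.1
  ⟨fun D _ => marginal P.1 D, P.2.2.projective_marginal⟩

lemma toProjectiveFamily_apply
    (P : {P : Measure (Struc L ar ℕ) // IsProbabilityMeasure P ∧ Exch ar P})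
    (D : Type) [Fintype D] (ι : D ↪ ℕ) (X : Struc L ar D) :
    (toProjectiveFamily P).1 D X = P.1 (CylN ar ι X) :=
  P.2.2.measure_cylN_eq (natEmbedding D) ι X

lemma toProjectiveFamily_injective :
    Function.Injective (toProjectiveFamily (L := L) (ar := ar)) := by
  rintro ⟨P₁, _, hE₁⟩ ⟨P₂, _, hE₂⟩ h
  exact Subtype.ext (hE₁.ext_of_marginal_eq hE₂ fun n =>
    congrFun (congrFun (congrArg Subtype.val h) (Fin n)) inferInstance)

lemma toProjectiveFamily_surjective :
    Function.Surjective (toProjectiveFamily (L := L) (ar := ar)) := by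
  rintro ⟨Q, hQ⟩
  have := hQ.isProbabilityMeasure_measure
  refine ⟨⟨hQ.measure, inferInstance, hQ.exch_measure⟩, Subtype.ext ?_⟩
  funext D _
  exact PMF.ext fun X => hQ.measure_cylN (natEmbedding D) X

end Correspondence

/-- the assignment `P_D(X) := P(ℕ_X)` is a bijection between exchangeable
distributions on the local σ-algebra on `ℕ` and projective families of distributions. -/
theorem stmt10 {L : Type} [Fintype L] (ar : L → ℕ) :
    ∃ Φ : {P : Measure (Struc L ar ℕ) // IsProbabilityMeasure P ∧ Exch ar P} →
        {Q : ∀ (D : Type) [Fintype D], PMF (Struc L ar D) // Projective Q},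
      Function.Bijective Φ ∧
      ∀ (P : {P : Measure (Struc L ar ℕ) // IsProbabilityMeasure P ∧ Exch ar P})
        (D : Type) [Fintype D] (ι : D ↪ ℕ) (X : Struc L ar D),
        (Φ P).1 D X = P.1 (CylN ar ι X) :=
  ⟨toProjectiveFamily, ⟨toProjectiveFamily_injective, toProjectiveFamily_surjective⟩,
    fun P D _ ι X => toProjectiveFamily_apply P D ι X⟩
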